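/- arXiv:2101.07319 — 4 statements merged into one kernel-verified Lean document; each statement's English description precedes it below -/
import Mathlib

section
/- Let n ≥ 2, let γ : (0,∞) → (0,∞) be continuous and strictly monotone, and let p₁,…,pₙ > 0 with p₁+…+pₙ = 1. Then the weighted quasigeometric mean M_p^{[γ]} satisfies M_p^{[γ]}(x₁,…,xₙ)·M_p^{[γ]}(1/x₁,…,1/xₙ) = 1 for all x₁,…,xₙ > 0 if and only if the generator γ satisfies the functional equation γ(x)·γ(1/x) = (γ(1))² for all x > 0. -/
open Set Function Real Filter Topology

/-!
Put `φ = log ∘ γ`, so that `M` is the quasi-arithmetic mean with generator `φ`, and let `h` be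
the inversion `x ↦ x⁻¹` transported by `φ` to the interval `φ((0,∞))`. The identity
`M(x) M(1/x) = 1` says that `h` commutes with the weighted arithmetic mean; on vectors
`(x, y, …, y)` this is Jensen's equation for `h` with the single weight `p₁ ∈ (0,1)`.
An antitone solution of that equation is affine: on a segment `[a, b]` its defect
`w(λ) = h(λa + (1-λ)b) - (λ h(a) + (1-λ) h(b))` is bounded, vanishes at `0` and `1`, and every
value of `w` is `p₁` or `1 - p₁` times another one, so `w = 0`. Finally an affine antitone
involution fixing `φ(1)` is the reflection `t ↦ 2 φ(1) - t`, which is the functional equation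
`φ(x) + φ(1/x) = 2 φ(1)`.
-/

def IsJensenOn (p : ℝ) (s : Set ℝ) (f : ℝ → ℝ) : Prop :=
  ∀ a ∈ s, ∀ b ∈ s, f (p * a + (1 - p) * b) = p * f a + (1 - p) * f b

lemma uIcc_eq_image_Icc (a b : ℝ) :
    uIcc a b = (fun l => l * a + (1 - l) * b) '' Icc 0 1 := by
  rw [← segment_eq_uIcc, segment_symm, segment_eq_image]
  simp only [smul_eq_mul, add_comm]

lemma IsJensenOn.eqOn_zero_of_abs_le {p : ℝ} (hp₀ : 0 < p) (hp₁ : p < 1) {w : ℝ → ℝ}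
    (hw : IsJensenOn p (Icc 0 1) w) (hw₀ : w 0 = 0) (hw₁ : w 1 = 0) {B : ℝ}
    (hB : ∀ l ∈ Icc (0 : ℝ) 1, |w l| ≤ B) : EqOn w 0 (Icc 0 1) := by
  set r := max p (1 - p)
  have hr₀ : 0 ≤ r := le_max_of_le_left hp₀.le
  -- `[0, 1] = p • [0, 1] ∪ (p + (1 - p) • [0, 1])`
  have hstep : ∀ l ∈ Icc (0 : ℝ) 1, ∃ l' ∈ Icc (0 : ℝ) 1, |w l| ≤ r * |w l'| := by
    rintro l ⟨hl₀, hl₁⟩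
    rcases le_or_gt l p with hlp | hpl
    · have hl' : l / p ∈ Icc (0 : ℝ) 1 := ⟨by positivity, (div_le_one hp₀).2 hlp⟩
      refine ⟨l / p, hl', ?_⟩
      have h := hw (l / p) hl' 0 ⟨le_rfl, zero_le_one⟩
      rw [mul_div_cancel₀ l hp₀.ne', mul_zero, add_zero, hw₀, mul_zero, add_zero] at h
      rw [h, abs_mul, abs_of_pos hp₀]
      gcongr
      exact le_max_left _ _
    · have hq : 0 < 1 - p := by linarith
      have hl' : (l - p) / (1 - p) ∈ Icc (0 : ℝ) 1 :=
        ⟨div_nonneg (by linarith) hq.le, (div_le_one hq).2 (by linarith)⟩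
      refine ⟨(l - p) / (1 - p), hl', ?_⟩
      have h := hw 1 ⟨zero_le_one, le_rfl⟩ _ hl'
      rw [mul_div_cancel₀ _ hq.ne', hw₁, mul_one, mul_zero, zero_add, add_sub_cancel] at h
      rw [h, abs_mul, abs_of_pos hq]
      gcongr
      exact le_max_right _ _
  have hpow : ∀ k : ℕ, ∀ l ∈ Icc (0 : ℝ) 1, |w l| ≤ r ^ k * B := by
    intro k
    induction k with
    | zero => simpa using hB
    | succ k ih =>
      intro l hl
      obtain ⟨l', hl', hle⟩ := hstep l hl
      calc |w l| ≤ r * |w l'| := hle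
        _ ≤ r * (r ^ k * B) := by gcongr; exact ih l' hl'
        _ = r ^ (k + 1) * B := by ring
  have hlim : Tendsto (fun k : ℕ => r ^ k * B) atTop (𝓝 0) := by
    simpa using (tendsto_pow_atTop_nhds_zero_of_lt_one hr₀ (max_lt hp₁ (by linarith))).mul_const B
  exact fun l hl => abs_nonpos_iff.1 (ge_of_tendsto' hlim fun k => hpow k l hl)

lemma IsJensenOn.of_antitoneOn {p : ℝ} (hp₀ : 0 < p) (hp₁ : p < 1) {s : Set ℝ} {f : ℝ → ℝ}
    (hs : Convex ℝ s) (hf : AntitoneOn f s) (hJ : IsJensenOn p s f) :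
    ∀ l ∈ Icc (0 : ℝ) 1, IsJensenOn l s f := by
  intro l hl a ha b hb
  have hab : uIcc a b ⊆ s := hs.ordConnected.uIcc_subset ha hb
  have hcombo : ∀ l ∈ Icc (0 : ℝ) 1, l * a + (1 - l) * b ∈ uIcc a b := fun l hl =>
    (uIcc_eq_image_Icc a b).symm ▸ mem_image_of_mem _ hl
  set w : ℝ → ℝ := fun l => f (l * a + (1 - l) * b) - (l * f a + (1 - l) * f b)
  have hw : IsJensenOn p (Icc 0 1) w := by
    intro l hl m hm
    have h := hJ _ (hab (hcombo l hl)) _ (hab (hcombo m hm))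
    simp only [w]
    rw [show (p * l + (1 - p) * m) * a + (1 - (p * l + (1 - p) * m)) * b =
      p * (l * a + (1 - l) * b) + (1 - p) * (m * a + (1 - m) * b) by ring, h]
    ring
  have hbound : ∀ l ∈ Icc (0 : ℝ) 1, |w l| ≤ dist (f a) (f b) := fun l hl =>
    Real.dist_le_of_mem_uIcc ((hf.mono hab).mapsTo_uIcc (hcombo l hl))
      ((uIcc_eq_image_Icc _ _).symm ▸ mem_image_of_mem _ hl)
  have h := hw.eqOn_zero_of_abs_le hp₀ hp₁ (by simp [w]) (by simp [w]) hbound hl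
  simpa [w, sub_eq_zero] using h

lemma add_apply_eq_two_mul_of_isJensenOn {s : Set ℝ} {h : ℝ → ℝ}
    (hJ : ∀ l ∈ Icc (0 : ℝ) 1, IsJensenOn l s h) (hanti : AntitoneOn h s) (hmaps : MapsTo h s s)
    (hinv : ∀ t ∈ s, h (h t) = t) {t₀ : ℝ} (ht₀ : t₀ ∈ s) (hfix : h t₀ = t₀) {t : ℝ}
    (ht : t ∈ s) : t + h t = 2 * t₀ := by
  have hmem : t₀ ∈ uIcc t (h t) := by
    rcases le_total t₀ t with hle | hle
    · exact Icc_subset_uIcc' ⟨hfix ▸ hanti ht₀ ht hle, hle⟩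
    · exact Icc_subset_uIcc ⟨hle, hfix ▸ hanti ht ht₀ hle⟩
  rw [uIcc_eq_image_Icc] at hmem
  obtain ⟨l, hl, hcombo⟩ := hmem
  dsimp only at hcombo
  have heq := hJ l hl t ht (h t) (hmaps ht)
  rw [hcombo, hfix, hinv t ht] at heq
  linear_combination hcombo - heq

noncomputable def conjInv (φ : ℝ → ℝ) (t : ℝ) : ℝ := φ (invFunOn φ (Ioi 0) t)⁻¹

section conjInv

variable {φ : ℝ → ℝ}

lemma conjInv_apply (hφ : InjOn φ (Ioi 0)) {x : ℝ} (hx : 0 < x) : conjInv φ (φ x) = φ x⁻¹ := by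
  rw [conjInv, hφ.leftInvOn_invFunOn hx]

lemma mapsTo_conjInv (hφ : InjOn φ (Ioi 0)) : MapsTo (conjInv φ) (φ '' Ioi 0) (φ '' Ioi 0) := by
  rintro _ ⟨x, hx, rfl⟩
  rw [conjInv_apply hφ hx]
  exact mem_image_of_mem φ (mem_Ioi.2 (inv_pos.2 hx))

lemma conjInv_conjInv (hφ : InjOn φ (Ioi 0)) {t : ℝ} (ht : t ∈ φ '' Ioi 0) :
    conjInv φ (conjInv φ t) = t := by
  obtain ⟨x, hx, rfl⟩ := ht
  rw [conjInv_apply hφ hx, conjInv_apply hφ (inv_pos.2 hx), inv_inv]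

lemma antitoneOn_conjInv (hφ : StrictMonoOn φ (Ioi 0) ∨ StrictAntiOn φ (Ioi 0)) :
    AntitoneOn (conjInv φ) (φ '' Ioi 0) := by
  have hinj : InjOn φ (Ioi 0) := hφ.elim StrictMonoOn.injOn StrictAntiOn.injOn
  rintro _ ⟨x, hx, rfl⟩ _ ⟨y, hy, rfl⟩ hxy
  rw [conjInv_apply hinj hx, conjInv_apply hinj hy]
  rcases hφ with hφ | hφ
  · exact hφ.monotoneOn (mem_Ioi.2 (inv_pos.2 hy)) (mem_Ioi.2 (inv_pos.2 hx))
      (inv_anti₀ hx ((hφ.le_iff_le hx hy).1 hxy))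
  · exact hφ.antitoneOn (mem_Ioi.2 (inv_pos.2 hx)) (mem_Ioi.2 (inv_pos.2 hy))
      (inv_anti₀ hy ((hφ.le_iff_ge hx hy).1 hxy))

end conjInv

lemma log_invFunOn_prod_rpow {ι : Type*} [Fintype ι] {γ : ℝ → ℝ} {s : Set ℝ}
    (hγ : ∀ x ∈ s, 0 < γ x) (hinj : InjOn γ s) (hconv : Convex ℝ ((fun x => log (γ x)) '' s))
    {w : ι → ℝ} (hw₀ : ∀ i, 0 ≤ w i) (hw₁ : ∑ i, w i = 1) {x : ι → ℝ} (hx : ∀ i, x i ∈ s) :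
    invFunOn γ s (∏ i, γ (x i) ^ w i) ∈ s ∧
      log (γ (invFunOn γ s (∏ i, γ (x i) ^ w i))) = ∑ i, w i * log (γ (x i)) := by
  obtain ⟨y, hy, hyt⟩ :=
    hconv.sum_mem (fun i _ => hw₀ i) hw₁ (fun i _ => mem_image_of_mem _ (hx i))
  simp only [smul_eq_mul] at hyt
  have hprod : ∏ i, γ (x i) ^ w i = γ y := by
    rw [← exp_log (hγ y hy), hyt, exp_sum]
    exact Finset.prod_congr rfl fun i _ => by rw [rpow_def_of_pos (hγ _ (hx i)), mul_comm]
  rw [hprod, hinj.leftInvOn_invFunOn hy]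
  exact ⟨hy, hyt⟩

lemma Fin.sum_mul_cons_const {m : ℕ} {p : Fin (m + 1) → ℝ} (hp : ∑ j, p j = 1) (f : ℝ → ℝ)
    (x y : ℝ) :
    ∑ j, p j * f ((Fin.cons x fun _ => y : Fin (m + 1) → ℝ) j) = p 0 * f x + (1 - p 0) * f y := by
  rw [Fin.sum_univ_succ] at hp ⊢
  simp only [Fin.cons_zero, Fin.cons_succ, ← Finset.sum_mul]
  rw [← hp, add_sub_cancel_left]

section quasiArithmeticMean

variable {m : ℕ} {φ : ℝ → ℝ} {p : Fin (m + 1) → ℝ} {A : (Fin (m + 1) → ℝ) → ℝ}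

lemma isJensenOn_conjInv (hφ : InjOn φ (Ioi 0)) (hp : ∑ j, p j = 1)
    (hA : ∀ x : Fin (m + 1) → ℝ, (∀ j, 0 < x j) → 0 < A x ∧ φ (A x) = ∑ j, p j * φ (x j))
    (hAinv : ∀ x : Fin (m + 1) → ℝ, (∀ j, 0 < x j) → A (fun j => (x j)⁻¹) = (A x)⁻¹) :
    IsJensenOn (p 0) (φ '' Ioi 0) (conjInv φ) := by
  rintro _ ⟨x, hx, rfl⟩ _ ⟨y, hy, rfl⟩
  set z : Fin (m + 1) → ℝ := Fin.cons x fun _ => y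
  have hz : ∀ j, 0 < z j := Fin.cases hx fun _ => hy
  calc conjInv φ (p 0 * φ x + (1 - p 0) * φ y) = conjInv φ (φ (A z)) := by
        rw [(hA z hz).2, Fin.sum_mul_cons_const hp]
    _ = φ (A fun j => (z j)⁻¹) := by rw [conjInv_apply hφ (hA z hz).1, hAinv z hz]
    _ = p 0 * φ x⁻¹ + (1 - p 0) * φ y⁻¹ :=
        (hA _ fun j => inv_pos.2 (hz j)).2.trans (Fin.sum_mul_cons_const hp (fun u => φ u⁻¹) x y)
    _ = p 0 * conjInv φ (φ x) + (1 - p 0) * conjInv φ (φ y) := by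
        rw [conjInv_apply hφ hx, conjInv_apply hφ hy]

lemma add_apply_inv_eq_of_map_inv (hφ : StrictMonoOn φ (Ioi 0) ∨ StrictAntiOn φ (Ioi 0))
    (hconv : Convex ℝ (φ '' Ioi 0)) (hp₀ : 0 < p 0) (hp₁ : p 0 < 1) (hp : ∑ j, p j = 1)
    (hA : ∀ x : Fin (m + 1) → ℝ, (∀ j, 0 < x j) → 0 < A x ∧ φ (A x) = ∑ j, p j * φ (x j))
    (hAinv : ∀ x : Fin (m + 1) → ℝ, (∀ j, 0 < x j) → A (fun j => (x j)⁻¹) = (A x)⁻¹)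
    {x : ℝ} (hx : 0 < x) : φ x + φ x⁻¹ = 2 * φ 1 := by
  have hinj : InjOn φ (Ioi 0) := hφ.elim StrictMonoOn.injOn StrictAntiOn.injOn
  have hanti := antitoneOn_conjInv hφ
  have hJ := (isJensenOn_conjInv hinj hp hA hAinv).of_antitoneOn hp₀ hp₁ hconv hanti
  have h := add_apply_eq_two_mul_of_isJensenOn hJ hanti (mapsTo_conjInv hinj)
    (fun t ht => conjInv_conjInv hinj ht) (mem_image_of_mem φ (mem_Ioi.2 one_pos))
    (by rw [conjInv_apply hinj one_pos, inv_one]) (mem_image_of_mem φ hx)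
  rwa [conjInv_apply hinj hx] at h

lemma map_inv_of_add_apply_inv_eq (hφ : InjOn φ (Ioi 0)) (hp : ∑ j, p j = 1)
    (hA : ∀ x : Fin (m + 1) → ℝ, (∀ j, 0 < x j) → 0 < A x ∧ φ (A x) = ∑ j, p j * φ (x j))
    (hfe : ∀ x : ℝ, 0 < x → φ x + φ x⁻¹ = 2 * φ 1) {x : Fin (m + 1) → ℝ} (hx : ∀ j, 0 < x j) :
    A (fun j => (x j)⁻¹) = (A x)⁻¹ := by
  obtain ⟨hAx, hφAx⟩ := hA x hx
  obtain ⟨hAx', hφAx'⟩ := hA _ fun j => inv_pos.2 (hx j)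
  refine hφ hAx' (inv_pos.2 hAx) ?_
  calc φ (A fun j => (x j)⁻¹) = ∑ j, p j * (2 * φ 1 - φ (x j)) := by
        rw [hφAx']
        exact Finset.sum_congr rfl fun j _ => by rw [← hfe _ (hx j), add_sub_cancel_left]
    _ = 2 * φ 1 - φ (A x) := by
        rw [hφAx]
        simp only [mul_sub, Finset.sum_sub_distrib, ← Finset.sum_mul, hp, one_mul]
    _ = φ (A x)⁻¹ := by rw [← hfe _ hAx, add_sub_cancel_left]

end quasiArithmeticMean

lemma mul_eq_sq_iff_log_add_log_eq {a b c : ℝ} (ha : 0 < a) (hb : 0 < b) (hc : 0 < c) :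
    a * b = c ^ 2 ↔ log a + log b = 2 * log c := by
  rw [← log_mul ha.ne' hb.ne', show 2 * log c = log (c ^ 2) by rw [log_pow]; norm_num]
  exact (log_injOn_pos.eq_iff (mul_pos ha hb) (pow_pos hc 2)).symm

/-- Theorem 1 of the paper. For `n ≥ 2`, a continuous strictly
monotone generator `γ : (0,∞) → (0,∞)` and weights `p₁,…,pₙ > 0` summing to `1`,
the weighted quasigeometric mean `M_p^{[γ]}(x) = γ⁻¹(∏ⱼ γ(xⱼ)^{pⱼ})` satisfies
`M(x)·M(1/x) = 1` for all positive `x` iff `γ(x)·γ(1/x) = γ(1)²` for all `x > 0`. -/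
theorem stmt_0 (n : ℕ) (hn : 2 ≤ n) (γ : ℝ → ℝ)
    (hγ_maps : ∀ x ∈ Ioi (0:ℝ), γ x ∈ Ioi (0:ℝ))
    (hγ_cont : ContinuousOn γ (Ioi 0))
    (hγ_mono : StrictMonoOn γ (Ioi 0) ∨ StrictAntiOn γ (Ioi 0))
    (p : Fin n → ℝ) (hp : ∀ j, 0 < p j) (hp1 : ∑ j, p j = 1)
    (M : (Fin n → ℝ) → ℝ)
    (hM : ∀ x : Fin n → ℝ, (∀ j, 0 < x j) →
      M x = invFunOn γ (Ioi 0) (∏ j, γ (x j) ^ p j)) :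
    (∀ x : Fin n → ℝ, (∀ j, 0 < x j) → M x * M (fun j => (x j)⁻¹) = 1) ↔
      (∀ x : ℝ, 0 < x → γ x * γ x⁻¹ = γ 1 ^ 2) := by
  obtain ⟨m, rfl⟩ : ∃ m, n = m + 1 := ⟨n - 1, by omega⟩
  set φ : ℝ → ℝ := fun x => log (γ x)
  have hφ_mono : StrictMonoOn φ (Ioi 0) ∨ StrictAntiOn φ (Ioi 0) :=
    hγ_mono.imp (strictMonoOn_log.comp · hγ_maps) (strictMonoOn_log.comp_strictAntiOn · hγ_maps)
  have hφ_inj : InjOn φ (Ioi 0) := hφ_mono.elim StrictMonoOn.injOn StrictAntiOn.injOn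
  have hconv : Convex ℝ (φ '' Ioi 0) :=
    (isPreconnected_Ioi.image φ (hγ_cont.log fun x hx => (hγ_maps x hx).ne')).convex
  have hmean : ∀ x : Fin (m + 1) → ℝ, (∀ j, 0 < x j) → 0 < M x ∧ φ (M x) = ∑ j, p j * φ (x j) :=
    fun x hx => hM x hx ▸ log_invFunOn_prod_rpow hγ_maps
      (hγ_mono.elim StrictMonoOn.injOn StrictAntiOn.injOn) hconv (fun j => (hp j).le) hp1 hx
  have hp0_lt_one : p 0 < 1 := by
    have : 0 < ∑ j : Fin m, p j.succ :=
      Finset.sum_pos (fun j _ => hp _) (@Finset.univ_nonempty _ _ ⟨⟨0, by omega⟩⟩)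
    linarith [Fin.sum_univ_succ p]
  have hfe_iff : ∀ x : ℝ, 0 < x → (γ x * γ x⁻¹ = γ 1 ^ 2 ↔ φ x + φ x⁻¹ = 2 * φ 1) :=
    fun x hx => mul_eq_sq_iff_log_add_log_eq (hγ_maps x hx) (hγ_maps _ (inv_pos.2 hx))
      (hγ_maps 1 (mem_Ioi.2 one_pos))
  have hinv_iff : ∀ x : Fin (m + 1) → ℝ, (∀ j, 0 < x j) →
      (M x * M (fun j => (x j)⁻¹) = 1 ↔ M (fun j => (x j)⁻¹) = (M x)⁻¹) :=
    fun x hx => ⟨eq_inv_of_mul_eq_one_right, fun h => h ▸ mul_inv_cancel₀ (hmean x hx).1.ne'⟩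
  constructor
  · intro H x hx
    exact (hfe_iff x hx).2 <| add_apply_inv_eq_of_map_inv hφ_mono hconv (hp 0) hp0_lt_one hp1 hmean
      (fun x hx => (hinv_iff x hx).1 (H x hx)) hx
  · intro hfe x hx
    exact (hinv_iff x hx).2 <| map_inv_of_add_apply_inv_eq hφ_inj hp1 hmean
      (fun x hx => (hfe_iff x hx).1 (hfe x hx)) hx
end

section
/- Let n ≥ 2, let φ : (0,∞) → ℝ be continuous and strictly monotone, and let p₁,…,pₙ > 0 with p₁+…+pₙ = 1. Then the weighted quasiarithmetic mean A_p^{[φ]} satisfies A_p^{[φ]}(x₁,…,xₙ)·A_p^{[φ]}(1/x₁,…,1/xₙ) = 1 for all x₁,…,xₙ > 0 if and only if there exist real numbers a, b with a ≠ 0 such that φ(1/x) = a·φ(x) + b for all x ∈ (0,∞). -/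
/-!
Put `J = φ((0,∞))`, an interval, and `f w = φ(1/φ⁻¹(w))` on `J`. Testing the identity
`A(x) A(1/x) = 1` on vectors taking only two values shows that `f` satisfies the Jensen equation
`f(t u + (1-t) v) = t f(u) + (1-t) f(v)` for the single weight `t = p₁ ∈ (0,1)`, and `f` is
antitone. For fixed `u, v ∈ J`, the defect `s ↦ f(s u + (1-s) v) - (s f(u) + (1-s) f(v))` is
bounded on `[0,1]`, vanishes at the endpoints and satisfies the same Jensen equation, so every
bound `C` on it improves to `max t (1-t) · C`, and it vanishes. Hence `f` is affine on `J`, which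
is the claimed relation `φ(1/x) = a φ(x) + b`. Conversely, such a relation makes `φ(1/·)` pass
through the weighted mean, so `A(1/x) = 1/A(x)`.
-/

open Set Function Filter Topology

def JensenEqOn (t : ℝ) (J : Set ℝ) (f : ℝ → ℝ) : Prop :=
  ∀ u ∈ J, ∀ v ∈ J, f (t * u + (1 - t) * v) = t * f u + (1 - t) * f v

section JensenEquation

variable {s t : ℝ} {J : Set ℝ} {f g : ℝ → ℝ}

lemma jensenEqOn_affine (a b : ℝ) : JensenEqOn s J (fun w => a * w + b) :=
  fun _ _ _ _ => by ring

lemma JensenEqOn.sub (hf : JensenEqOn s J f) (hg : JensenEqOn s J g) :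
    JensenEqOn s J (f - g) :=
  fun u hu v hv => by simp only [Pi.sub_apply, hf u hu v hv, hg u hu v hv]; ring

lemma JensenEqOn.abs_le_max_mul (ht0 : 0 < t) (ht1 : t < 1)
    (hg : JensenEqOn t (Icc 0 1) g) (hg0 : g 0 = 0) (hg1 : g 1 = 0) {C : ℝ}
    (hC : ∀ s ∈ Icc (0 : ℝ) 1, |g s| ≤ C) (hs : s ∈ Icc (0 : ℝ) 1) :
    |g s| ≤ max t (1 - t) * C := by
  have h0 : (0 : ℝ) ∈ Icc (0 : ℝ) 1 := left_mem_Icc.2 zero_le_one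
  have h1 : (1 : ℝ) ∈ Icc (0 : ℝ) 1 := right_mem_Icc.2 zero_le_one
  rcases le_total s t with hst | hts
  · have hs' : s / t ∈ Icc (0 : ℝ) 1 := ⟨div_nonneg hs.1 ht0.le, (div_le_one ht0).2 hst⟩
    have h := hg _ hs' 0 h0
    rw [mul_div_cancel₀ s ht0.ne', mul_zero, add_zero, hg0, mul_zero, add_zero] at h
    calc |g s| = t * |g (s / t)| := by rw [h, abs_mul, abs_of_pos ht0]
      _ ≤ max t (1 - t) * C :=
        mul_le_mul (le_max_left _ _) (hC _ hs') (abs_nonneg _) (ht0.le.trans (le_max_left _ _))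
  · have ht1' : 0 < 1 - t := sub_pos.2 ht1
    have hs' : (s - t) / (1 - t) ∈ Icc (0 : ℝ) 1 :=
      ⟨div_nonneg (sub_nonneg.2 hts) ht1'.le, (div_le_one ht1').2 (by linarith [hs.2])⟩
    have h := hg 1 h1 _ hs'
    rw [mul_div_cancel₀ _ ht1'.ne', mul_one, add_sub_cancel, hg1, mul_zero, zero_add] at h
    calc |g s| = (1 - t) * |g ((s - t) / (1 - t))| := by rw [h, abs_mul, abs_of_pos ht1']
      _ ≤ max t (1 - t) * C :=
        mul_le_mul (le_max_right _ _) (hC _ hs') (abs_nonneg _) (ht1'.le.trans (le_max_right _ _))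

lemma JensenEqOn.eq_zero_of_abs_le (ht0 : 0 < t) (ht1 : t < 1)
    (hg : JensenEqOn t (Icc 0 1) g) (hg0 : g 0 = 0) (hg1 : g 1 = 0) {C : ℝ}
    (hC : ∀ s ∈ Icc (0 : ℝ) 1, |g s| ≤ C) (hs : s ∈ Icc (0 : ℝ) 1) : g s = 0 := by
  have hbound : ∀ k : ℕ, ∀ s ∈ Icc (0 : ℝ) 1, |g s| ≤ max t (1 - t) ^ k * C := by
    intro k
    induction k with
    | zero => simpa using hC
    | succ k ih =>
      intro s hs
      rw [pow_succ', mul_assoc]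
      exact hg.abs_le_max_mul ht0 ht1 hg0 hg1 ih hs
  have hlim : Tendsto (fun k : ℕ => max t (1 - t) ^ k * C) atTop (𝓝 0) := by
    simpa using (tendsto_pow_atTop_nhds_zero_of_lt_one (ht0.le.trans (le_max_left _ _))
      (max_lt ht1 (by linarith))).mul_const C
  exact abs_nonpos_iff.1 (ge_of_tendsto' hlim fun k => hbound k s hs)

lemma JensenEqOn.of_antitoneOn (ht0 : 0 < t) (ht1 : t < 1) (hJ : Convex ℝ J)
    (hf : AntitoneOn f J) (h : JensenEqOn t J f) (hs : s ∈ Icc (0 : ℝ) 1) :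
    JensenEqOn s J f := by
  intro u hu v hv
  have hmem : ∀ s ∈ Icc (0 : ℝ) 1, s * u + (1 - s) * v ∈ J := fun s hs =>
    hJ hu hv hs.1 (sub_nonneg.2 hs.2) (add_sub_cancel _ _)
  set g : ℝ → ℝ := fun s => f (s * u + (1 - s) * v) - (s * f u + (1 - s) * f v) with hg
  have hgJ : JensenEqOn t (Icc 0 1) g := by
    intro s₁ hs₁ s₂ hs₂
    have harg : (t * s₁ + (1 - t) * s₂) * u + (1 - (t * s₁ + (1 - t) * s₂)) * v
        = t * (s₁ * u + (1 - s₁) * v) + (1 - t) * (s₂ * u + (1 - s₂) * v) := by ring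
    simp only [hg, harg, h _ (hmem s₁ hs₁) _ (hmem s₂ hs₂)]
    ring
  have hbdd : ∀ s ∈ Icc (0 : ℝ) 1, |g s| ≤ 2 * max |f u| |f v| := by
    intro s hs
    have hf_mid : |f (s * u + (1 - s) * v)| ≤ max |f u| |f v| := by
      rcases le_total u v with huv | hvu
      · rw [max_comm]
        exact abs_le_max_abs_abs
          (hf (hmem s hs) hv (by nlinarith [mul_nonneg hs.1 (sub_nonneg.2 huv)]))
          (hf hu (hmem s hs) (by nlinarith [mul_nonneg (sub_nonneg.2 hs.2) (sub_nonneg.2 huv)]))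
      · exact abs_le_max_abs_abs
          (hf (hmem s hs) hu (by nlinarith [mul_nonneg (sub_nonneg.2 hs.2) (sub_nonneg.2 hvu)]))
          (hf hv (hmem s hs) (by nlinarith [mul_nonneg hs.1 (sub_nonneg.2 hvu)]))
    have hf_comb : |s * f u + (1 - s) * f v| ≤ max |f u| |f v| := by
      calc |s * f u + (1 - s) * f v| ≤ s * |f u| + (1 - s) * |f v| := by
            refine (abs_add_le _ _).trans_eq ?_
            rw [abs_mul, abs_mul, abs_of_nonneg hs.1, abs_of_nonneg (sub_nonneg.2 hs.2)]
        _ ≤ max |f u| |f v| := by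
            nlinarith [le_max_left |f u| |f v|, le_max_right |f u| |f v|, hs.1, hs.2]
    calc |g s| ≤ |f (s * u + (1 - s) * v)| + |s * f u + (1 - s) * f v| := abs_sub _ _
      _ ≤ 2 * max |f u| |f v| := by linarith
  have := hgJ.eq_zero_of_abs_le ht0 ht1 (by simp [hg]) (by simp [hg]) hbdd hs
  exact sub_eq_zero.1 this

lemma eq_zero_of_forall_jensenEqOn (h : ∀ s ∈ Icc (0 : ℝ) 1, JensenEqOn s J g)
    {u v : ℝ} (hu : u ∈ J) (hv : v ∈ J) (huv : u < v) (hgu : g u = 0) (hgv : g v = 0)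
    {w : ℝ} (hw : w ∈ J) : g w = 0 := by
  -- in each case one of `u, v, w` is a convex combination of the other two
  rcases le_total w u with hwu | huw
  · have hvw : 0 < v - w := by linarith
    have hs : (v - u) / (v - w) ∈ Icc (0 : ℝ) 1 :=
      ⟨div_nonneg (by linarith) hvw.le, (div_le_one hvw).2 (by linarith)⟩
    have := h _ hs w hw v hv
    rw [show (v - u) / (v - w) * w + (1 - (v - u) / (v - w)) * v = u by field_simp; ring,
      hgu, hgv, mul_zero, add_zero] at this
    exact (mul_eq_zero.1 this.symm).resolve_left (div_pos (by linarith) hvw).ne'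
  rcases le_total w v with hwv | hvw
  · have hvu : 0 < v - u := by linarith
    have hs : (v - w) / (v - u) ∈ Icc (0 : ℝ) 1 :=
      ⟨div_nonneg (by linarith) hvu.le, (div_le_one hvu).2 (by linarith)⟩
    have := h _ hs u hu v hv
    rwa [show (v - w) / (v - u) * u + (1 - (v - w) / (v - u)) * v = w by field_simp; ring,
      hgu, hgv, mul_zero, mul_zero, add_zero] at this
  · have hwu : 0 < w - u := by linarith
    have hs : (w - v) / (w - u) ∈ Icc (0 : ℝ) 1 :=
      ⟨div_nonneg (by linarith) hwu.le, (div_le_one hwu).2 (by linarith)⟩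
    have := h _ hs u hu w hw
    rw [show (w - v) / (w - u) * u + (1 - (w - v) / (w - u)) * w = v by field_simp; ring,
      hgu, hgv, mul_zero, zero_add] at this
    refine (mul_eq_zero.1 this.symm).resolve_left (sub_ne_zero.2 (ne_of_gt ?_))
    exact (div_lt_one hwu).2 (by linarith)

lemma exists_eq_mul_add_of_forall_jensenEqOn (hJ : J.Nontrivial)
    (h : ∀ s ∈ Icc (0 : ℝ) 1, JensenEqOn s J f) : ∃ a b : ℝ, ∀ w ∈ J, f w = a * w + b := by
  obtain ⟨u, hu, v, hv, huv⟩ := hJ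
  wlog hlt : u < v generalizing u v
  · exact this v hv u hu huv.symm (huv.symm.lt_of_le (not_lt.1 hlt))
  set a := (f v - f u) / (v - u)
  refine ⟨a, f u - a * u, fun w hw => sub_eq_zero.1 ?_⟩
  refine eq_zero_of_forall_jensenEqOn (g := f - fun w => a * w + (f u - a * u))
    (fun s hs => (h s hs).sub (jensenEqOn_affine _ _)) hu hv hlt (by simp) ?_ hw
  simp only [Pi.sub_apply, a]
  field_simp [sub_ne_zero.2 hlt.ne']
  ring

end JensenEquation

section QuasiArithmeticMean

variable {ι : Type*} [Fintype ι] {φ : ℝ → ℝ} {p x : ι → ℝ}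

noncomputable def quasiArithMean (φ : ℝ → ℝ) (p x : ι → ℝ) : ℝ :=
  invFunOn φ (Ioi 0) (∑ j, p j * φ (x j))

lemma convex_image_Ioi (hφ : ContinuousOn φ (Ioi 0)) : Convex ℝ (φ '' Ioi 0) :=
  ((convex_Ioi 0).isPreconnected.image φ hφ).ordConnected.convex

lemma sum_mul_mem_image_Ioi (hφ : ContinuousOn φ (Ioi 0)) (hp : ∀ j, 0 ≤ p j)
    (hp1 : ∑ j, p j = 1) (hx : ∀ j, 0 < x j) : ∑ j, p j * φ (x j) ∈ φ '' Ioi 0 :=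
  (convex_image_Ioi hφ).sum_mem (fun j _ => hp j) hp1 fun j _ => mem_image_of_mem φ (hx j)

lemma quasiArithMean_pos (hφ : ContinuousOn φ (Ioi 0)) (hp : ∀ j, 0 ≤ p j)
    (hp1 : ∑ j, p j = 1) (hx : ∀ j, 0 < x j) : 0 < quasiArithMean φ p x :=
  invFunOn_mem (sum_mul_mem_image_Ioi hφ hp hp1 hx)

lemma apply_quasiArithMean (hφ : ContinuousOn φ (Ioi 0)) (hp : ∀ j, 0 ≤ p j)
    (hp1 : ∑ j, p j = 1) (hx : ∀ j, 0 < x j) :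
    φ (quasiArithMean φ p x) = ∑ j, p j * φ (x j) :=
  invFunOn_eq (sum_mul_mem_image_Ioi hφ hp hp1 hx)

lemma sum_mul_ite_eq [DecidableEq ι] (hp1 : ∑ j, p j = 1) (i : ι) (y z : ℝ) :
    ∑ j, p j * (if j = i then y else z) = p i * y + (1 - p i) * z := by
  have hcompl : ∑ j ∈ {i}ᶜ, p j = 1 - p i := by
    rw [Fintype.sum_eq_add_sum_compl i] at hp1
    linarith
  rw [Fintype.sum_eq_add_sum_compl i, if_pos rfl, ← hcompl, Finset.sum_mul]
  congr 1
  refine Finset.sum_congr rfl fun j hj => ?_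
  rw [if_neg (by simpa using hj)]

lemma quasiArithMean_mul_quasiArithMean_inv {a b : ℝ} (hφ : ContinuousOn φ (Ioi 0))
    (hφ_inj : InjOn φ (Ioi 0)) (hp : ∀ j, 0 ≤ p j) (hp1 : ∑ j, p j = 1)
    (hab : ∀ x : ℝ, 0 < x → φ x⁻¹ = a * φ x + b) (hx : ∀ j, 0 < x j) :
    quasiArithMean φ p x * quasiArithMean φ p (fun j => (x j)⁻¹) = 1 := by
  set m := quasiArithMean φ p x
  have hm : 0 < m := quasiArithMean_pos hφ hp hp1 hx
  have hsum : ∑ j, p j * φ (x j)⁻¹ = φ m⁻¹ := by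
    calc ∑ j, p j * φ (x j)⁻¹ = a * ∑ j, p j * φ (x j) + b * ∑ j, p j := by
          simp only [hab _ (hx _), Finset.mul_sum, ← Finset.sum_add_distrib]
          exact Finset.sum_congr rfl fun j _ => by ring
      _ = φ m⁻¹ := by rw [hab m hm, apply_quasiArithMean hφ hp hp1 hx, hp1, mul_one]
  have hinv : quasiArithMean φ p (fun j => (x j)⁻¹) = m⁻¹ := by
    rw [quasiArithMean, hsum]
    exact hφ_inj.leftInvOn_invFunOn (inv_pos.2 hm)
  rw [hinv, mul_inv_cancel₀ hm.ne']

lemma antitoneOn_apply_inv_invFunOn (hφ : StrictMonoOn φ (Ioi 0) ∨ StrictAntiOn φ (Ioi 0)) :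
    AntitoneOn (fun w => φ (invFunOn φ (Ioi 0) w)⁻¹) (φ '' Ioi 0) := by
  have hinj : InjOn φ (Ioi 0) := hφ.elim StrictMonoOn.injOn StrictAntiOn.injOn
  rintro _ ⟨c, hc, rfl⟩ _ ⟨d, hd, rfl⟩ hle
  have hc' : c⁻¹ ∈ Ioi (0 : ℝ) := mem_Ioi.2 (inv_pos.2 hc)
  have hd' : d⁻¹ ∈ Ioi (0 : ℝ) := mem_Ioi.2 (inv_pos.2 hd)
  simp only [hinj.leftInvOn_invFunOn hc, hinj.leftInvOn_invFunOn hd]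
  rcases hφ with hφ | hφ
  · exact (hφ.le_iff_le hd' hc').2 ((inv_le_inv₀ hd hc).2 ((hφ.le_iff_le hc hd).1 hle))
  · exact (hφ.le_iff_ge hd' hc').2 ((inv_le_inv₀ hc hd).2 ((hφ.le_iff_ge hc hd).1 hle))

lemma jensenEqOn_of_quasiArithMean_mul_inv (hφ : ContinuousOn φ (Ioi 0))
    (hφ_inj : InjOn φ (Ioi 0)) (hp : ∀ j, 0 ≤ p j) (hp1 : ∑ j, p j = 1)
    (H : ∀ x : ι → ℝ, (∀ j, 0 < x j) →
      quasiArithMean φ p x * quasiArithMean φ p (fun j => (x j)⁻¹) = 1) (i : ι) :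
    JensenEqOn (p i) (φ '' Ioi 0) (fun w => φ (invFunOn φ (Ioi 0) w)⁻¹) := by
  classical
  rintro _ ⟨c, hc, rfl⟩ _ ⟨d, hd, rfl⟩
  set x : ι → ℝ := fun j => if j = i then c else d
  have hx : ∀ j, 0 < x j := fun j => by dsimp only [x]; split_ifs; exacts [hc, hd]
  have hx' : ∀ j, 0 < (x j)⁻¹ := fun j => inv_pos.2 (hx j)
  have hsum : ∀ ψ : ℝ → ℝ, ∑ j, p j * ψ (x j) = p i * ψ c + (1 - p i) * ψ d := fun ψ => by
    simp only [x, apply_ite ψ]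
    exact sum_mul_ite_eq hp1 i _ _
  have hmean_inv : quasiArithMean φ p (fun j => (x j)⁻¹) = (quasiArithMean φ p x)⁻¹ :=
    eq_inv_of_mul_eq_one_right (H x hx)
  simp only [hφ_inj.leftInvOn_invFunOn hc, hφ_inj.leftInvOn_invFunOn hd]
  rw [← hsum φ, ← hsum (fun y => φ y⁻¹), ← quasiArithMean, ← hmean_inv]
  exact apply_quasiArithMean hφ hp hp1 hx'

lemma lt_one_of_sum_eq_one [Nontrivial ι] (hp : ∀ j, 0 < p j) (hp1 : ∑ j, p j = 1) (i : ι) :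
    p i < 1 := by
  obtain ⟨j, hj⟩ := exists_ne i
  exact hp1 ▸ Finset.single_lt_sum hj (Finset.mem_univ _) (Finset.mem_univ _) (hp j)
    fun k _ _ => (hp k).le

theorem exists_eq_mul_add_of_quasiArithMean_mul_inv [Nontrivial ι]
    (hφ : ContinuousOn φ (Ioi 0)) (hφ_mono : StrictMonoOn φ (Ioi 0) ∨ StrictAntiOn φ (Ioi 0))
    (hp : ∀ j, 0 < p j) (hp1 : ∑ j, p j = 1)
    (H : ∀ x : ι → ℝ, (∀ j, 0 < x j) →
      quasiArithMean φ p x * quasiArithMean φ p (fun j => (x j)⁻¹) = 1) :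
    ∃ a b : ℝ, a ≠ 0 ∧ ∀ x : ℝ, 0 < x → φ x⁻¹ = a * φ x + b := by
  have hinj : InjOn φ (Ioi 0) := hφ_mono.elim StrictMonoOn.injOn StrictAntiOn.injOn
  obtain ⟨i⟩ := (inferInstance : Nonempty ι)
  have hjensen := jensenEqOn_of_quasiArithMean_mul_inv hφ hinj (fun j => (hp j).le) hp1 H i
  have hJ : (φ '' Ioi 0).Nontrivial :=
    (show (Ioi (0 : ℝ)).Nontrivial from ⟨1, by norm_num, 2, by norm_num, by norm_num⟩).image_of_injOn hinj
  obtain ⟨a, b, hab⟩ := exists_eq_mul_add_of_forall_jensenEqOn hJ fun s hs =>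
    hjensen.of_antitoneOn (hp i) (lt_one_of_sum_eq_one hp hp1 i) (convex_image_Ioi hφ)
      (antitoneOn_apply_inv_invFunOn hφ_mono) hs
  have key : ∀ x : ℝ, 0 < x → φ x⁻¹ = a * φ x + b := fun x hx => by
    simpa only [hinj.leftInvOn_invFunOn hx] using hab _ (mem_image_of_mem φ hx)
  refine ⟨a, b, fun ha => ?_, key⟩
  have h12 : φ (1 : ℝ)⁻¹ = φ (2 : ℝ)⁻¹ := by
    rw [key 1 one_pos, key 2 two_pos, ha, zero_mul, zero_mul]
  have := hinj (by norm_num) (by norm_num) h12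
  norm_num at this

end QuasiArithmeticMean

/-- Proposition 1 of the paper. For `n ≥ 2`, a continuous strictly
monotone `φ : (0,∞) → ℝ` and weights `p₁,…,pₙ > 0` summing to `1`, the weighted
quasiarithmetic mean `A_p^{[φ]}(x) = φ⁻¹(∑ⱼ pⱼ φ(xⱼ))` satisfies `A(x)·A(1/x) = 1`
for all positive `x` iff there are `a ≠ 0` and `b` with `φ(1/x) = a·φ(x) + b` for all `x > 0`. -/
theorem stmt_1 (n : ℕ) (hn : 2 ≤ n) (φ : ℝ → ℝ)
    (hφ_cont : ContinuousOn φ (Ioi 0))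
    (hφ_mono : StrictMonoOn φ (Ioi 0) ∨ StrictAntiOn φ (Ioi 0))
    (p : Fin n → ℝ) (hp : ∀ j, 0 < p j) (hp1 : ∑ j, p j = 1)
    (A : (Fin n → ℝ) → ℝ)
    (hA : ∀ x : Fin n → ℝ, (∀ j, 0 < x j) →
      A x = invFunOn φ (Ioi 0) (∑ j, p j * φ (x j))) :
    (∀ x : Fin n → ℝ, (∀ j, 0 < x j) → A x * A (fun j => (x j)⁻¹) = 1) ↔
      ∃ a b : ℝ, a ≠ 0 ∧ ∀ x : ℝ, 0 < x → φ x⁻¹ = a * φ x + b := by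
  have : Nontrivial (Fin n) := Fin.nontrivial_iff_two_le.2 hn
  have hA_mean : ∀ x : Fin n → ℝ, (∀ j, 0 < x j) → A x * A (fun j => (x j)⁻¹) =
      quasiArithMean φ p x * quasiArithMean φ p (fun j => (x j)⁻¹) := fun x hx => by
    rw [hA x hx, hA _ fun j => inv_pos.2 (hx j), quasiArithMean, quasiArithMean]
  constructor
  · intro H
    exact exists_eq_mul_add_of_quasiArithMean_mul_inv hφ_cont hφ_mono hp hp1
      fun x hx => (hA_mean x hx).symm.trans (H x hx)
  · rintro ⟨a, b, -, hab⟩ x hx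
    rw [hA_mean x hx]
    exact quasiArithMean_mul_quasiArithMean_inv hφ_cont
      (hφ_mono.elim StrictMonoOn.injOn StrictAntiOn.injOn) (fun j => (hp j).le) hp1 hab hx
end

section
/- Let n ≥ 2, let φ : ℝ → ℝ be continuous and strictly monotone, and let p₁,…,pₙ > 0 with p₁+…+pₙ = 1. Then the weighted quasiarithmetic mean A_p^{[φ]} : ℝⁿ → ℝ is odd (i.e. A_p^{[φ]}(-t₁,…,-tₙ) = -A_p^{[φ]}(t₁,…,tₙ) for all t₁,…,tₙ ∈ ℝ) if and only if the function φ - φ(0) is odd, i.e. φ(-t) + φ(t) = 2·φ(0) for all t ∈ ℝ. -/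
/-!
Oddness of the mean, applied to the vector `(s, -s, …, -s)`, says: if `φ r = α φ(s) + (1-α) φ(-s)`
with `α = p₁ ∈ (0, 1)`, then `φ(-r) = α φ(-s) + (1-α) φ(s)`. Passing from `s` to such an `r`
(which lies between `-s` and `s`) preserves `φ(s) + φ(-s)` and multiplies `φ(s) - φ(-s)` by
`2α - 1`, of modulus `< 1`. So on the compact set of `s ∈ [-|t|, |t|]` with
`φ(s) + φ(-s) = φ(t) + φ(-t)`, a minimiser of `|φ(s) - φ(-s)|` has `φ(s) = φ(-s)`, i.e. `s = 0`,
whence `φ(t) + φ(-t) = 2 φ(0)`. The converse is a direct computation.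
-/

open Function Set

theorem weighted_sum_mem_range_of_continuous {ι : Type*} {s : Finset ι} {φ : ℝ → ℝ}
    (hφ : Continuous φ) {w : ι → ℝ} (hw₀ : ∀ i ∈ s, 0 ≤ w i) (hw₁ : ∑ i ∈ s, w i = 1)
    (x : ι → ℝ) : ∑ i ∈ s, w i * φ (x i) ∈ range φ :=
  (isPreconnected_range hφ).convex.sum_mem hw₀ hw₁ fun i _ => mem_range_self (x i)

theorem sum_mul_ite_eq_of_sum_eq_one {ι : Type*} [Fintype ι] [DecidableEq ι] {w : ι → ℝ}
    (hw : ∑ j, w j = 1) (i : ι) (a b : ℝ) :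
    ∑ j, w j * (if j = i then a else b) = w i * a + (1 - w i) * b := by
  have hsplit (j : ι) :
      w j * (if j = i then a else b) = w j * b + if j = i then w j * (a - b) else 0 := by
    split_ifs <;> ring
  simp only [hsplit, Finset.sum_add_distrib, ← Finset.sum_mul, hw, Finset.sum_ite_eq',
    Finset.mem_univ, if_true]
  ring

section Swap

variable {φ : ℝ → ℝ} {α : ℝ}

theorem exists_mem_uIcc_add_eq_and_sub_eq_mul (hφ : Continuous φ)
    (hswap : ∀ r s, φ r = α * φ s + (1 - α) * φ (-s) → φ (-r) = α * φ (-s) + (1 - α) * φ s)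
    (h₀ : 0 ≤ α) (h₁ : α ≤ 1) (s : ℝ) :
    ∃ r ∈ uIcc s (-s), φ (-r) + φ r = φ (-s) + φ s ∧
      φ r - φ (-r) = (2 * α - 1) * (φ s - φ (-s)) := by
  have hmem : α * φ s + (1 - α) * φ (-s) ∈ uIcc (φ s) (φ (-s)) := by
    rw [← segment_eq_uIcc]
    exact ⟨α, 1 - α, h₀, by linarith, by ring, rfl⟩
  obtain ⟨r, hr, hφr⟩ := intermediate_value_uIcc hφ.continuousOn hmem
  have hφnr := hswap r s hφr
  exact ⟨r, hr, by rw [hφr, hφnr]; ring, by rw [hφr, hφnr]; ring⟩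

theorem map_neg_add_map_eq_two_mul_map_zero_of_swap (hφ : Continuous φ)
    (hswap : ∀ r s, φ r = α * φ s + (1 - α) * φ (-s) → φ (-r) = α * φ (-s) + (1 - α) * φ s)
    (hinj : Injective φ) (h₀ : 0 < α) (h₁ : α < 1) (t : ℝ) : φ (-t) + φ t = 2 * φ 0 := by
  set K := Icc (-|t|) |t| ∩ {s | φ (-s) + φ s = φ (-t) + φ t}
  have hK : IsCompact K := isCompact_Icc.inter_right (isClosed_eq (by fun_prop) continuous_const)
  have htK : t ∈ K := ⟨⟨neg_abs_le t, le_abs_self t⟩, rfl⟩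
  obtain ⟨s, ⟨hs, hsK⟩, hmin⟩ :=
    hK.exists_isMinOn ⟨t, htK⟩ (f := fun s => |φ s - φ (-s)|) (by fun_prop)
  obtain ⟨r, hr, hrsum, hrd⟩ := exists_mem_uIcc_add_eq_and_sub_eq_mul hφ hswap h₀.le h₁.le s
  have hrK : r ∈ K := by
    refine ⟨uIcc_subset_Icc hs ⟨?_, ?_⟩ hr, hrsum.trans hsK⟩ <;> linarith [hs.1, hs.2]
  have hle : |φ s - φ (-s)| ≤ |2 * α - 1| * |φ s - φ (-s)| := by
    have := isMinOn_iff.1 hmin r hrK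
    rwa [hrd, abs_mul] at this
  have hlt : |2 * α - 1| < 1 := abs_lt.2 ⟨by linarith, by linarith⟩
  have hs₀ : s = 0 := by
    have hsym : φ s = φ (-s) := by
      by_contra hne
      have := abs_pos.2 (sub_ne_zero.2 hne)
      nlinarith
    linarith [hinj hsym]
  rw [← hsK.out, hs₀, neg_zero]
  ring

end Swap

/-- Proposition 2 of the paper. For `n ≥ 2`, a continuous strictly
monotone `φ : ℝ → ℝ` and weights `p₁,…,pₙ > 0` summing to `1`, the weighted
quasiarithmetic mean `A_p^{[φ]}(t) = φ⁻¹(∑ⱼ pⱼ φ(tⱼ))` is odd iff `φ - φ(0)` is odd,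
i.e. `φ(-t) + φ(t) = 2·φ(0)` for all `t`. -/
theorem stmt_2 (n : ℕ) (hn : 2 ≤ n) (φ : ℝ → ℝ)
    (hφ_cont : Continuous φ)
    (hφ_mono : StrictMono φ ∨ StrictAnti φ)
    (p : Fin n → ℝ) (hp : ∀ j, 0 < p j) (hp1 : ∑ j, p j = 1)
    (A : (Fin n → ℝ) → ℝ)
    (hA : ∀ t : Fin n → ℝ, A t = invFun φ (∑ j, p j * φ (t j))) :
    (∀ t : Fin n → ℝ, A (fun j => -(t j)) = -A t) ↔
      (∀ t : ℝ, φ (-t) + φ t = 2 * φ 0) := by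
  have hinj : Injective φ := hφ_mono.elim StrictMono.injective StrictAnti.injective
  have hφA (t : Fin n → ℝ) : φ (A t) = ∑ j, p j * φ (t j) := by
    rw [hA]
    exact invFun_eq (weighted_sum_mem_range_of_continuous hφ_cont (fun j _ => (hp j).le) hp1 t)
  constructor
  · intro hodd
    let i₀ : Fin n := ⟨0, by omega⟩
    have hpi₀ : p i₀ < 1 := hp1 ▸ Finset.single_lt_sum (j := ⟨1, by omega⟩) (by simp [i₀])
      (Finset.mem_univ _) (Finset.mem_univ _) (hp _) fun k _ _ => (hp k).le
    refine map_neg_add_map_eq_two_mul_map_zero_of_swap hφ_cont (fun r s hr => ?_) hinj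
      (hp i₀) hpi₀
    have hAt : A (fun j => if j = i₀ then s else -s) = r := hinj <| by
      simp only [hφA, apply_ite φ, sum_mul_ite_eq_of_sum_eq_one hp1, hr]
    rw [← hAt, ← hodd, hφA]
    simp only [neg_ite, neg_neg, apply_ite φ, sum_mul_ite_eq_of_sum_eq_one hp1]
  · intro hfe t
    have hfe' (x : ℝ) : φ (-x) = 2 * φ 0 - φ x := eq_sub_of_add_eq (hfe x)
    apply hinj
    rw [hφA, hfe']
    calc ∑ j, p j * φ (-t j) = ∑ j, p j * (2 * φ 0 - φ (t j)) := by simp only [hfe']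
      _ = 2 * φ 0 - φ (A t) := by
          simp only [mul_sub, Finset.sum_sub_distrib, ← Finset.sum_mul, hp1, one_mul, hφA,
            mul_comm (2 : ℝ)]
end

section
/- Let n ≥ 2, let γ : (0,∞) → (0,∞) be continuous and strictly monotone, and let p₁,…,pₙ > 0 with p₁+…+pₙ = 1. If the weighted quasigeometric mean M_p^{[γ]} is homogeneous (M_p^{[γ]}(tx₁,…,txₙ) = t·M_p^{[γ]}(x₁,…,xₙ) for all t, x₁,…,xₙ > 0) and satisfies M_p^{[γ]}(x₁,…,xₙ)·M_p^{[γ]}(1/x₁,…,1/xₙ) = 1 for all x₁,…,xₙ > 0, then there exist a, b ∈ ℝ with a ≠ 0 such that γ(t) = e^b·t^a for all t > 0. -/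
/-!
In logarithmic coordinates `g u = log γ (exp u)`, the mean of a vector taking the value `exp X`
at one index `j₀` and `exp Y` elsewhere is `exp K(X, Y)`, where `K` is the two-variable weighted
quasi-arithmetic mean `g (K(X, Y)) = p_{j₀} g X + (1 - p_{j₀}) g Y`. Homogeneity and reciprocity
say that translations and `x ↦ -x` commute with `K`, so `g (s + ·)` and `g (-·)` generate the same
mean as `g`. Generators of the same mean are affine functions of each other (a maximum principle
on compact intervals), so `h = g - g 0` satisfies `h (s + x) = A(s) h x + h s` and `h (-x) = A h x`;
injectivity of `h` forces `A = -1`, then `A(s) = 1`, so `h` is additive, continuous, hence linear.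
-/

open Set Function Real

def PreservesMean (p : ℝ) (g G : ℝ → ℝ) : Prop :=
  ∀ a b m, g m = p * g a + (1 - p) * g b → G m = p * G a + (1 - p) * G b

section QuasiArithmeticMean

variable {p : ℝ} {g G : ℝ → ℝ}

lemma Continuous.exists_eq_weightedMean (hg : Continuous g) (hp0 : 0 ≤ p) (hp1 : p ≤ 1)
    (a b : ℝ) : ∃ m, g m = p * g a + (1 - p) * g b := by
  have hmem : p * g a + (1 - p) * g b ∈ uIcc (g a) (g b) := by
    rw [← segment_eq_uIcc]
    exact ⟨p, 1 - p, hp0, by linarith, by ring, rfl⟩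
  obtain ⟨m, -, hm⟩ := intermediate_value_uIcc hg.continuousOn hmem
  exact ⟨m, hm⟩

lemma StrictMono.exists_lt_le_weightedMean_eq (hmono : StrictMono g) (hg : Continuous g)
    (hp0 : 0 < p) (hp1 : p < 1) {u x v : ℝ} (hux : u < x) (hxv : x < v) :
    ∃ a ∈ Ico u x, ∃ b ∈ Icc x v, g x = p * g a + (1 - p) * g b := by
  set d := min (g x - g u) (g v - g x)
  have hd : 0 < d := lt_min (sub_pos.2 (hmono hux)) (sub_pos.2 (hmono hxv))
  have hdu : d ≤ g x - g u := min_le_left _ _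
  have hdv : d ≤ g v - g x := min_le_right _ _
  obtain ⟨a, ha, hga⟩ := intermediate_value_Icc hux.le hg.continuousOn
    (show g x - (1 - p) * d ∈ Icc (g u) (g x) from ⟨by nlinarith, by nlinarith⟩)
  obtain ⟨b, hb, hgb⟩ := intermediate_value_Icc hxv.le hg.continuousOn
    (show g x + p * d ∈ Icc (g x) (g v) from ⟨by nlinarith, by nlinarith⟩)
  have hax : a < x := hmono.lt_iff_lt.1 (by rw [hga]; nlinarith)
  exact ⟨a, ⟨ha.1, hax⟩, b, hb, by rw [hga, hgb]; ring⟩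

lemma preservesMean_comp_of_commute {K : ℝ → ℝ → ℝ} (hinj : Injective g)
    (hK : ∀ a b, g (K a b) = p * g a + (1 - p) * g b) {φ : ℝ → ℝ}
    (hφ : ∀ a b, K (φ a) (φ b) = φ (K a b)) : PreservesMean p g (fun x => g (φ x)) := by
  intro a b m hm
  dsimp only
  rw [hinj (hm.trans (hK a b).symm), ← hφ, hK]

namespace PreservesMean

lemma add_affine (hG : PreservesMean p g G) (c A B : ℝ) :
    PreservesMean p g (fun x => c * G x + A * g x + B) := by
  intro a b m hm
  linear_combination c * hG a b m hm + A * hm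

/-- Maximum principle: a leftmost maximiser inside `(u, v)` would be a weighted mean of a point
on its left, where `G` is smaller, and a point on its right. -/
lemma nonpos_on_Icc (hmono : StrictMono g) (hg : Continuous g)
    (hp0 : 0 < p) (hp1 : p < 1) (hGc : Continuous G) (hG : PreservesMean p g G) {u v : ℝ}
    (hu : G u ≤ 0) (hv : G v ≤ 0) : ∀ x ∈ Icc u v, G x ≤ 0 := by
  by_contra! hpos
  obtain ⟨x, hx, hGx⟩ := hpos
  obtain ⟨y, hy, hmax⟩ := isCompact_Icc.exists_isMaxOn ⟨x, hx⟩ hGc.continuousOn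
  have hGy : 0 < G y := hGx.trans_le (hmax hx)
  have hZ : IsCompact (Icc u v ∩ G ⁻¹' {G y}) :=
    isCompact_Icc.inter_right (isClosed_singleton.preimage hGc)
  obtain ⟨x₀, ⟨hx₀, hGx₀⟩, hleast⟩ := hZ.exists_isLeast ⟨y, hy, rfl⟩
  rw [mem_preimage, mem_singleton_iff] at hGx₀
  have hux₀ : u < x₀ := hx₀.1.lt_of_ne (by rintro rfl; linarith)
  have hx₀v : x₀ < v := hx₀.2.lt_of_ne (by rintro rfl; linarith)
  obtain ⟨a, ha, b, hb, hmean⟩ := hmono.exists_lt_le_weightedMean_eq hg hp0 hp1 hux₀ hx₀v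
  have haI : a ∈ Icc u v := ⟨ha.1, ha.2.le.trans hx₀.2⟩
  have hGa : G a < G y :=
    (hmax haI).lt_of_ne fun h => (hleast ⟨haI, h⟩).not_gt ha.2
  have hGb : G b ≤ G y := hmax ⟨hx₀.1.trans hb.1, hb.2⟩
  have := hG a b x₀ hmean
  nlinarith

lemma exists_affine_on_Icc (hmono : StrictMono g) (hg : Continuous g) (hp0 : 0 < p)
    (hp1 : p < 1) (hGc : Continuous G) (hG : PreservesMean p g G) {u v : ℝ} (huv : u < v) :
    ∃ A B, ∀ x ∈ Icc u v, G x = A * g x + B := by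
  have hne : g v - g u ≠ 0 := (sub_pos.2 (hmono huv)).ne'
  set A := (G v - G u) / (g v - g u)
  have hAv : G v = A * g v + (G u - A * g u) := by
    simp only [A]; field_simp; ring
  refine ⟨A, G u - A * g u, fun x hx => le_antisymm ?_ ?_⟩
  · have := (hG.add_affine 1 (-A) (-(G u - A * g u))).nonpos_on_Icc hmono hg
      hp0 hp1 (by fun_prop) (by linarith) (by linarith) x hx
    linarith
  · have := (hG.add_affine (-1) A (G u - A * g u)).nonpos_on_Icc hmono hg
      hp0 hp1 (by fun_prop) (by linarith) (by linarith) x hx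
    linarith

lemma exists_affine_of_strictMono (hmono : StrictMono g) (hg : Continuous g) (hp0 : 0 < p)
    (hp1 : p < 1) (hGc : Continuous G) (hG : PreservesMean p g G) :
    ∃ A B, ∀ x, G x = A * g x + B := by
  obtain ⟨A, B, hAB⟩ := hG.exists_affine_on_Icc hmono hg hp0 hp1 hGc zero_lt_one
  refine ⟨A, B, fun x => ?_⟩
  obtain ⟨A', B', hAB'⟩ := hG.exists_affine_on_Icc hmono hg hp0 hp1 hGc
    (show min x 0 < max x 1 by grind)
  have h0 := (hAB 0 ⟨le_rfl, zero_le_one⟩).symm.trans (hAB' 0 ⟨min_le_right _ _, by grind⟩)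
  have h1 := (hAB 1 ⟨zero_le_one, le_rfl⟩).symm.trans (hAB' 1 ⟨by grind, le_max_right _ _⟩)
  have hA : A' = A := by
    have hg01 : g 1 - g 0 ≠ 0 := (sub_pos.2 (hmono zero_lt_one)).ne'
    have : (A' - A) * (g 1 - g 0) = 0 := by linarith
    linarith [(mul_eq_zero.1 this).resolve_right hg01]
  rw [hAB' x ⟨min_le_left _ _, le_max_left _ _⟩, hA]
  rw [hA] at h0
  linarith

lemma exists_affine (hinj : Injective g) (hg : Continuous g) (hp0 : 0 < p) (hp1 : p < 1)
    (hGc : Continuous G) (hG : PreservesMean p g G) : ∃ A B, ∀ x, G x = A * g x + B := by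
  rcases hg.strictMono_of_inj hinj with hmono | hanti
  · exact hG.exists_affine_of_strictMono hmono hg hp0 hp1 hGc
  · have hG' : PreservesMean p (fun x => -g x) G := fun a b m hm => hG a b m (by linarith)
    obtain ⟨A, B, hAB⟩ := hG'.exists_affine_of_strictMono hanti.neg hg.neg hp0 hp1 hGc
    exact ⟨-A, B, fun x => by rw [hAB x]; ring⟩

end PreservesMean

lemma sub_map_zero_neg_of_preservesMean (hinj : Injective g) (hg : Continuous g) (hp0 : 0 < p)
    (hp1 : p < 1) (hneg : PreservesMean p g (fun x => g (-x))) (x : ℝ) :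
    g (-x) - g 0 = -(g x - g 0) := by
  obtain ⟨A, B, hAB⟩ := hneg.exists_affine hinj hg hp0 hp1 (by fun_prop)
  have hB : g 0 = A * g 0 + B := by simpa using hAB 0
  have hA : ∀ y, g (-y) - g 0 = A * (g y - g 0) := fun y => by rw [hAB y]; linarith
  have hg1 : g 1 - g 0 ≠ 0 := sub_ne_zero.2 fun h => one_ne_zero (hinj h)
  have hA2 : (A - 1) * (A + 1) = 0 := by
    have h1 := hA (-1)
    rw [neg_neg, hA 1] at h1
    apply (mul_eq_zero.1 (show ((A - 1) * (A + 1)) * (g 1 - g 0) = 0 by linarith)).resolve_right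
    exact hg1
  rcases mul_eq_zero.1 hA2 with hA1 | hA1
  · have h1 := hA 1
    rw [sub_eq_zero.1 hA1, one_mul, sub_left_inj] at h1
    exact absurd (hinj h1) (by norm_num)
  · rw [hA x, eq_neg_of_add_eq_zero_left hA1]
    ring

lemma map_add_sub_map_zero_of_preservesMean (hinj : Injective g) (hg : Continuous g)
    (hp0 : 0 < p) (hp1 : p < 1) (htrans : ∀ s, PreservesMean p g (fun x => g (s + x)))
    (hneg : PreservesMean p g (fun x => g (-x))) (s x : ℝ) :
    g (s + x) - g 0 = (g s - g 0) + (g x - g 0) := by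
  obtain ⟨A, B, hAB⟩ := (htrans s).exists_affine hinj hg hp0 hp1 (by fun_prop)
  have hB : g s = A * g 0 + B := by simpa using hAB 0
  have hA : ∀ y, g (s + y) - g 0 = A * (g y - g 0) + (g s - g 0) :=
    fun y => by rw [hAB y]; linarith
  rcases eq_or_ne s 0 with rfl | hs
  · simp
  have hgs : g s - g 0 ≠ 0 := sub_ne_zero.2 fun h => hs (hinj h)
  have hA1 : A = 1 := by
    have h := hA (-s)
    rw [add_neg_cancel, sub_self, sub_map_zero_neg_of_preservesMean hinj hg hp0 hp1 hneg] at h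
    have : (A - 1) * (g s - g 0) = 0 := by linarith
    linarith [(mul_eq_zero.1 this).resolve_right hgs]
  rw [hA x, hA1]
  ring

lemma exists_eq_mul_add_of_preservesMean (hinj : Injective g) (hg : Continuous g)
    (hp0 : 0 < p) (hp1 : p < 1) (htrans : ∀ s, PreservesMean p g (fun x => g (s + x)))
    (hneg : PreservesMean p g (fun x => g (-x))) : ∃ a ≠ 0, ∀ x, g x = a * x + g 0 := by
  let h : ℝ →+ ℝ := AddMonoidHom.mk' (fun x => g x - g 0)
    (map_add_sub_map_zero_of_preservesMean hinj hg hp0 hp1 htrans hneg)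
  have hh : Continuous h := hg.sub continuous_const
  refine ⟨g 1 - g 0, sub_ne_zero.2 fun h1 => one_ne_zero (hinj h1), fun x => ?_⟩
  have := map_real_smul h hh x 1
  simp only [smul_eq_mul, mul_one, h, AddMonoidHom.mk'_apply] at this
  linarith

end QuasiArithmeticMean

section QuasigeometricMean

variable {γ : ℝ → ℝ}

noncomputable def logConj (γ : ℝ → ℝ) (u : ℝ) : ℝ := log (γ (exp u))

lemma continuous_logConj (hγ_maps : ∀ x ∈ Ioi (0:ℝ), γ x ∈ Ioi (0:ℝ))
    (hγ_cont : ContinuousOn γ (Ioi 0)) : Continuous (logConj γ) :=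
  continuous_iff_continuousAt.2 fun u =>
    ((hγ_cont.continuousAt (Ioi_mem_nhds (exp_pos u))).comp continuous_exp.continuousAt).log
      (hγ_maps _ (exp_pos u)).ne'

lemma injective_logConj (hγ_maps : ∀ x ∈ Ioi (0:ℝ), γ x ∈ Ioi (0:ℝ))
    (hγ_inj : InjOn γ (Ioi 0)) : Injective (logConj γ) := fun a b h =>
  exp_injective (hγ_inj (exp_pos a) (exp_pos b)
    (log_injOn_pos (hγ_maps _ (exp_pos a)) (hγ_maps _ (exp_pos b)) h))

lemma exp_logConj_log (hγ_maps : ∀ x ∈ Ioi (0:ℝ), γ x ∈ Ioi (0:ℝ)) {t : ℝ} (ht : 0 < t) :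
    exp (logConj γ (log t)) = γ t := by
  rw [logConj, exp_log ht, exp_log (hγ_maps t ht)]

lemma prod_ite_rpow {n : ℕ} {p : Fin n → ℝ} (hp1 : ∑ j, p j = 1) (j₀ : Fin n) (a : ℝ)
    {b : ℝ} (hb : 0 < b) : ∏ j, (if j = j₀ then a else b) ^ p j = a ^ p j₀ * b ^ (1 - p j₀) := by
  rw [← Finset.mul_prod_erase _ _ (Finset.mem_univ j₀), if_pos rfl,
    Finset.prod_congr rfl fun j hj => by rw [if_neg (Finset.ne_of_mem_erase hj)],
    ← rpow_sum_of_pos hb, Finset.sum_erase_eq_sub (Finset.mem_univ _), hp1]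

lemma exists_invFunOn_prod_ite_rpow_eq_exp (hγ_maps : ∀ x ∈ Ioi (0:ℝ), γ x ∈ Ioi (0:ℝ))
    (hγ_cont : ContinuousOn γ (Ioi 0)) (hγ_inj : InjOn γ (Ioi 0)) {n : ℕ} {p : Fin n → ℝ}
    (hp : ∀ j, 0 < p j) (hp1 : ∑ j, p j = 1) (j₀ : Fin n) (X Y : ℝ) :
    ∃ w, logConj γ w = p j₀ * logConj γ X + (1 - p j₀) * logConj γ Y ∧
      invFunOn γ (Ioi 0) (∏ j, γ (exp (if j = j₀ then X else Y)) ^ p j) = exp w := by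
  have hp₀ : p j₀ ≤ 1 := hp1 ▸ Finset.single_le_sum (fun j _ => (hp j).le) (Finset.mem_univ j₀)
  obtain ⟨w, hw⟩ :=
    (continuous_logConj hγ_maps hγ_cont).exists_eq_weightedMean (hp j₀).le hp₀ X Y
  refine ⟨w, hw, ?_⟩
  have hprod : ∏ j, γ (exp (if j = j₀ then X else Y)) ^ p j = γ (exp w) := by
    simp only [apply_ite (fun z => γ (exp z))]
    rw [prod_ite_rpow hp1 j₀ _ (hγ_maps _ (exp_pos Y)),
      rpow_def_of_pos (hγ_maps _ (exp_pos X)), rpow_def_of_pos (hγ_maps _ (exp_pos Y)),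
      ← exp_add, ← exp_log (hγ_maps _ (exp_pos w))]
    unfold logConj at hw
    rw [hw]
    ring_nf
  rw [hprod]
  exact hγ_inj.leftInvOn_invFunOn (exp_pos w)

end QuasigeometricMean

/-- Theorem 2, (i) ⟹ (ii). For `n ≥ 2`, a continuous strictly
monotone `γ : (0,∞) → (0,∞)` and weights `p₁,…,pₙ > 0` summing to `1`, if the
weighted quasigeometric mean `M_p^{[γ]}(x) = γ⁻¹(∏ⱼ γ(xⱼ)^{pⱼ})` is homogeneous and
satisfies `M(x)·M(1/x) = 1` for all positive `x`, then `γ(t) = e^b·t^a` for some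
`a ≠ 0` and `b`. -/
theorem stmt_15 (n : ℕ) (hn : 2 ≤ n) (γ : ℝ → ℝ)
    (hγ_maps : ∀ x ∈ Ioi (0:ℝ), γ x ∈ Ioi (0:ℝ))
    (hγ_cont : ContinuousOn γ (Ioi 0))
    (hγ_mono : StrictMonoOn γ (Ioi 0) ∨ StrictAntiOn γ (Ioi 0))
    (p : Fin n → ℝ) (hp : ∀ j, 0 < p j) (hp1 : ∑ j, p j = 1)
    (M : (Fin n → ℝ) → ℝ)
    (hM : ∀ x : Fin n → ℝ, (∀ j, 0 < x j) →
      M x = invFunOn γ (Ioi 0) (∏ j, γ (x j) ^ p j))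
    (h_hom : ∀ t : ℝ, 0 < t → ∀ x : Fin n → ℝ, (∀ j, 0 < x j) →
      M (fun j => t * x j) = t * M x)
    (h_rec : ∀ x : Fin n → ℝ, (∀ j, 0 < x j) →
      M x * M (fun j => (x j)⁻¹) = 1) :
    ∃ a b : ℝ, a ≠ 0 ∧ ∀ t : ℝ, 0 < t → γ t = Real.exp b * t ^ a := by
  let j₀ : Fin n := ⟨0, by omega⟩
  have hp₀ : p j₀ < 1 := by
    rw [← hp1, ← Finset.add_sum_erase _ _ (Finset.mem_univ j₀), lt_add_iff_pos_right]
    exact Finset.sum_pos (fun j _ => hp j)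
      ⟨⟨1, by omega⟩, Finset.mem_erase.2 ⟨by simp [j₀, Fin.ext_iff], Finset.mem_univ _⟩⟩
  have hγ_inj : InjOn γ (Ioi 0) := hγ_mono.elim StrictMonoOn.injOn StrictAntiOn.injOn
  have hg := continuous_logConj hγ_maps hγ_cont
  have hginj := injective_logConj hγ_maps hγ_inj
  choose K hK hMK using fun X Y =>
    exists_invFunOn_prod_ite_rpow_eq_exp hγ_maps hγ_cont hγ_inj hp hp1 j₀ X Y
  have hMK' : ∀ X Y, M (fun j => exp (if j = j₀ then X else Y)) = exp (K X Y) := fun X Y =>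
    (hM _ fun _ => exp_pos _).trans (hMK X Y)
  have hK_add : ∀ s X Y, K (s + X) (s + Y) = s + K X Y := fun s X Y => exp_injective <| by
    simp_rw [exp_add, ← hMK', ← add_ite, exp_add, h_hom _ (exp_pos s) _ fun _ => exp_pos _]
  have hK_neg : ∀ X Y, K (-X) (-Y) = -K X Y := fun X Y => eq_neg_of_add_eq_zero_right <|
    exp_injective <| by
      simp_rw [exp_add, ← hMK', ← neg_ite, exp_neg, h_rec _ fun _ => exp_pos _, exp_zero]
  obtain ⟨a, ha, hlin⟩ := exists_eq_mul_add_of_preservesMean hginj hg (hp j₀) hp₀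
    (fun s => preservesMean_comp_of_commute hginj hK (hK_add s))
    (preservesMean_comp_of_commute hginj hK hK_neg)
  refine ⟨a, logConj γ 0, ha, fun t ht => ?_⟩
  rw [← exp_logConj_log hγ_maps ht, hlin, rpow_def_of_pos ht, ← exp_add, mul_comm a, add_comm]
end
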